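/- arXiv:2402.13953 — 3 statements merged into one kernel-verified Lean document; each statement's English description precedes it below -/
import Mathlib

section
/- For all real q ≥ 3, one has 2·((q-1)/(q+1))^((q-1)/2) ≤ 1, with equality if and only if q = 3. -/
/-! With `t = (q - 1) / 2 ≥ 1` the base is `(q - 1) / (q + 1) = (1 + t⁻¹)⁻¹`, so the claim is
`2 ≤ (1 + t⁻¹) ^ t`, strictly for `t > 1`. This is Bernoulli's inequality `1 + t s < (1 + s) ^ t`
at `s = t⁻¹`. -/

open Real

theorem two_lt_one_add_inv_rpow_self {t : ℝ} (ht : 1 < t) : 2 < (1 + t⁻¹) ^ t := by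
  have ht₀ : 0 < t := one_pos.trans ht
  have bernoulli := one_add_mul_self_lt_rpow_one_add (by linarith [inv_pos.2 ht₀])
    (inv_ne_zero ht₀.ne') ht
  rwa [mul_inv_cancel₀ ht₀.ne', one_add_one_eq_two] at bernoulli

theorem two_mul_inv_one_add_inv_rpow_self_lt_one {t : ℝ} (ht : 1 < t) :
    2 * (1 + t⁻¹)⁻¹ ^ t < 1 := by
  have hpos : 0 < 1 + t⁻¹ := by positivity
  rw [inv_rpow hpos.le, ← div_eq_mul_inv, div_lt_one (rpow_pos_of_pos hpos t)]
  exact two_lt_one_add_inv_rpow_self ht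

theorem two_mul_rpow_le_one (q : ℝ) (hq : 3 ≤ q) :
    2 * ((q - 1) / (q + 1)) ^ ((q - 1) / 2) ≤ 1 ∧
      (2 * ((q - 1) / (q + 1)) ^ ((q - 1) / 2) = 1 ↔ q = 3) := by
  rcases hq.eq_or_lt with rfl | hq
  · norm_num
  have hlt : 2 * ((q - 1) / (q + 1)) ^ ((q - 1) / 2) < 1 := by
    have hbase : (q - 1) / (q + 1) = (1 + ((q - 1) / 2)⁻¹)⁻¹ := by
      rw [inv_div, one_add_div (by linarith), inv_div]
      ring_nf
    rw [hbase]
    exact two_mul_inv_one_add_inv_rpow_self_lt_one (by linarith)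
  exact ⟨hlt.le, iff_of_false hlt.ne hq.ne'⟩
end

section
/- The function q ↦ 2·((q-1)/(q+1))^((q-1)/2) is strictly decreasing on the interval (1, ∞). -/
/-!
Substituting `s = (q - 1) / 2` turns the function into `2 * (s / (s + 1)) ^ s`. For `a > 0`, the
derivative of `s * log (s / (s + a))` is `log u + 1 - u` with `u = s / (s + a) ∈ (0, 1)`, which is
negative because `log u < u - 1` for `u ≠ 1`; exponentiating preserves strict monotonicity.
-/

open Real Set

namespace Real

variable {a s : ℝ}

theorem log_div_add_add_div_neg (ha : 0 < a) (hs : 0 < s) :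
    log (s / (s + a)) + a / (s + a) < 0 := by
  have hsa : 0 < s + a := by linarith
  have hne : s / (s + a) ≠ 1 := by
    rw [ne_eq, div_eq_one_iff_eq hsa.ne']
    linarith
  have hsub_one : s / (s + a) - 1 = -(a / (s + a)) := by
    field_simp
    ring
  linarith [log_lt_sub_one_of_pos (by positivity) hne]

theorem hasDerivAt_mul_log_div_add (ha : 0 < a) (hs : 0 < s) :
    HasDerivAt (fun x => x * log (x / (x + a))) (log (s / (s + a)) + a / (s + a)) s := by
  have hsa : 0 < s + a := by linarith
  have hquot : HasDerivAt (fun x => x / (x + a)) (a / (s + a) ^ 2) s :=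
    ((hasDerivAt_id' s).div ((hasDerivAt_id' s).add_const a) hsa.ne').congr_deriv (by ring)
  refine ((hasDerivAt_id' s).mul (hquot.log (by positivity))).congr_deriv ?_
  field_simp

theorem strictAntiOn_mul_log_div_add (ha : 0 < a) :
    StrictAntiOn (fun x => x * log (x / (x + a))) (Ioi 0) := by
  have hderiv : ∀ x ∈ Ioi (0 : ℝ),
      HasDerivAt (fun x => x * log (x / (x + a))) (log (x / (x + a)) + a / (x + a)) x :=
    fun x hx => hasDerivAt_mul_log_div_add ha hx
  refine strictAntiOn_of_hasDerivWithinAt_neg (f' := fun x => log (x / (x + a)) + a / (x + a))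
    (convex_Ioi 0) (HasDerivAt.continuousOn hderiv) ?_ ?_ <;> rw [interior_Ioi]
  · exact fun x hx => (hderiv x hx).hasDerivWithinAt
  · exact fun x hx => log_div_add_add_div_neg ha hx

theorem strictAntiOn_div_add_rpow_self (ha : 0 < a) :
    StrictAntiOn (fun x => (x / (x + a)) ^ x) (Ioi 0) := by
  have hexp := exp_strictMono.comp_strictAntiOn (strictAntiOn_mul_log_div_add ha)
  refine hexp.congr fun x (hx : 0 < x) => ?_
  simp only [Function.comp_apply]
  rw [rpow_def_of_pos (by positivity), mul_comm]

end Real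

theorem strictAntiOn_two_mul_rpow :
    StrictAntiOn (fun q : ℝ => 2 * ((q - 1) / (q + 1)) ^ ((q - 1) / 2)) (Set.Ioi 1) := by
  intro x (hx : 1 < x) y (hy : 1 < y) hxy
  have hhalf : ∀ q : ℝ, (q - 1) / (q + 1) = (q - 1) / 2 / ((q - 1) / 2 + 1) := fun q => by
    field_simp
    ring_nf
  have hlt := Real.strictAntiOn_div_add_rpow_self one_pos
    (show 0 < (x - 1) / 2 by linarith) (show 0 < (y - 1) / 2 by linarith) (by linarith)
  simp only [hhalf]
  linarith
end

section
/- For every real x ≥ 5/2, one has ((x+1)/(x+3/2))·(1 + 1/x)^(2x+1) ≤ e². Consequently, for all integers m ≥ 2, (1/4)·((m+1/2)/(m+1))·(1 + 1/(m-1/2))^{2m} < e²/4. -/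
/-!
Taking logarithms, the continuous bound says
`(2x + 1) log (1 + 1/x) < 2 + log ((x + 3/2)/(x + 1))`.
Cutting `[x, x + 1]` into four equal pieces and bounding `log` on each by its tangent gives
`log (1 + 1/x) ≤ ∑_{k<4} 1/(4x + k)`, while `log ((x + 3/2)/(x + 1)) ≥ 1/(2x + 3)`; the resulting
rational inequality holds for `x ≥ 5/2` because its numerator, expanded in `x - 5/2`, has positive
coefficients. The discrete bound is the case `x = m - 1/2` for `m ≥ 3`, and a numerical check
for `m = 2`.
-/

open Real Finset

lemma log_sub_log_le_sub_div {a b : ℝ} (ha : 0 < a) (hb : 0 < b) :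
    log b - log a ≤ (b - a) / a := by
  rw [← log_div hb.ne' ha.ne', sub_div, div_self ha.ne']
  exact log_le_sub_one_of_pos (div_pos hb ha)

lemma sub_div_le_log_sub_log {a b : ℝ} (ha : 0 < a) (hb : 0 < b) :
    (b - a) / b ≤ log b - log a := by
  rw [← log_div hb.ne' ha.ne', sub_div, div_self hb.ne', ← inv_div]
  exact one_sub_inv_le_log_of_pos (div_pos hb ha)

lemma log_one_add_inv_le_sum {x : ℝ} (hx : 0 < x) {n : ℕ} (hn : 0 < n) :
    log (1 + x⁻¹) ≤ ∑ k ∈ range n, 1 / (n * x + k) := by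
  have hn' : (0 : ℝ) < n := by exact_mod_cast hn
  set p : ℕ → ℝ := fun k => x + k / n
  have hp : ∀ k, 0 < p k := fun k => by positivity
  have htel : log (1 + x⁻¹) = ∑ k ∈ range n, (log (p (k + 1)) - log (p k)) := by
    rw [sum_range_sub (fun k => log (p k)), ← log_div (hp n).ne' (hp 0).ne']
    simp only [p, Nat.cast_zero, zero_div, add_zero, div_self hn'.ne']
    rw [add_div, div_self hx.ne', one_div]
  rw [htel]
  refine sum_le_sum fun k _ => (log_sub_log_le_sub_div (hp k) (hp (k + 1))).trans_eq ?_
  simp only [p]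
  push_cast
  field_simp
  ring

lemma two_mul_add_one_mul_sum_lt {x : ℝ} (hx : 5 / 2 ≤ x) :
    (2 * x + 1) * ∑ k ∈ range 4, 1 / (4 * x + k) < 2 + 1 / (2 * x + 3) := by
  simp only [sum_range_succ, sum_range_zero]
  push_cast
  obtain ⟨y, hy, rfl⟩ : ∃ y, 0 ≤ y ∧ x = y + 5 / 2 := ⟨x - 5 / 2, by linarith, by ring⟩
  rw [← sub_pos]
  have heq : 2 + 1 / (2 * (y + 5 / 2) + 3) - (2 * (y + 5 / 2) + 1) *
      (0 + 1 / (4 * (y + 5 / 2) + 0) + 1 / (4 * (y + 5 / 2) + 1) + 1 / (4 * (y + 5 / 2) + 2)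
        + 1 / (4 * (y + 5 / 2) + 3))
      = (128 * y ^ 4 + 1248 * y ^ 3 + 4296 * y ^ 2 + 5936 * y + 2472) /
        ((2 * y + 8) * (4 * y + 10) * (4 * y + 11) * (4 * y + 12) * (4 * y + 13)) := by
    field_simp
    ring
  rw [heq]
  positivity

lemma div_mul_one_add_inv_rpow_lt_exp_two {x : ℝ} (hx : 5 / 2 ≤ x) :
    (x + 1) / (x + 3 / 2) * (1 + 1 / x) ^ (2 * x + 1) < exp 2 := by
  have hx₀ : 0 < x := by linarith
  have hlog : log (x + 1) - log (x + 3 / 2) + (2 * x + 1) * log (1 + x⁻¹) < 2 :=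
    calc log (x + 1) - log (x + 3 / 2) + (2 * x + 1) * log (1 + x⁻¹)
        ≤ -(1 / 2 / (x + 3 / 2)) + (2 * x + 1) * ∑ k ∈ range 4, 1 / (4 * x + k) := by
          gcongr
          · have h := sub_div_le_log_sub_log (by linarith : 0 < x + 1) (by linarith : 0 < x + 3 / 2)
            rw [show x + 3 / 2 - (x + 1) = 1 / 2 by ring] at h
            linarith
          · exact_mod_cast log_one_add_inv_le_sum hx₀ four_pos
      _ < 2 := by
          have : 1 / 2 / (x + 3 / 2) = 1 / (2 * x + 3) := by field_simp
          linarith [two_mul_add_one_mul_sum_lt hx]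
  rw [one_div, rpow_def_of_pos (by positivity), ← exp_log (by linarith : 0 < x + 1),
    ← exp_log (by linarith : 0 < x + 3 / 2), ← exp_sub, ← exp_add, mul_comm (log _)]
  exact exp_lt_exp.mpr hlog

lemma quarter_mul_div_mul_one_add_inv_pow_lt {m : ℕ} (hm : 3 ≤ m) :
    (1 / 4 : ℝ) * ((m + 1 / 2) / (m + 1)) * (1 + 1 / (m - 1 / 2)) ^ (2 * m) < exp 2 / 4 := by
  have hm' : (3 : ℝ) ≤ m := by exact_mod_cast hm
  have key := div_mul_one_add_inv_rpow_lt_exp_two (x := m - 1 / 2) (by linarith)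
  rw [show (m : ℝ) - 1 / 2 + 1 = m + 1 / 2 by ring, show (m : ℝ) - 1 / 2 + 3 / 2 = m + 1 by ring,
    show (2 : ℝ) * (m - 1 / 2) + 1 = (2 * m : ℕ) by push_cast; ring, rpow_natCast] at key
  linarith

theorem alpha_quotient_bound :
    (∀ x : ℝ, 5 / 2 ≤ x →
        ((x + 1) / (x + 3 / 2)) * (1 + 1 / x) ^ (2 * x + 1) ≤ Real.exp 2) ∧
    ∀ m : ℕ, 2 ≤ m →
      (1 / 4 : ℝ) * (((m : ℝ) + 1 / 2) / ((m : ℝ) + 1)) * (1 + 1 / ((m : ℝ) - 1 / 2)) ^ (2 * m)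
        < Real.exp 2 / 4 := by
  refine ⟨fun x hx => (div_mul_one_add_inv_rpow_lt_exp_two hx).le, fun m hm => ?_⟩
  rcases hm.eq_or_lt with rfl | hm
  · have : (2.7182818283 : ℝ) ^ 2 < exp 2 := by
      rw [show (2 : ℝ) = (2 : ℕ) by norm_num, ← exp_one_pow]; gcongr; exact exp_one_gt_d9
    norm_num at this ⊢
    linarith
  · exact quarter_mul_div_mul_one_add_inv_pow_lt hm
end
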